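/- arXiv:1312.6187 — 5 statements merged into one kernel-verified Lean document; each statement's English description precedes it below -/
import Mathlib

section
/- For α > 0, the generalized Hermite polynomials satisfy the product formula H^{(α)}_n(x) H^{(α)}_m(x) = ∑_{i=0}^{min(m,n)} α^i i! C(m,i) C(n,i) H^{(α)}_{m+n-2i}(x). -/
/-!
With `D` the derivative, the explicit coefficients give `D H_{n+1} = (n+1) H_n` and the three-term
recurrence `X H_{n+1} = H_{n+2} + α (n+1) H_n`; together they say that `X - α D` raises `H_n` to
`H_{n+1}`. Raising one factor of a product and using the Leibniz rule gives
`H_{n+1} H_{m+1} = (X - α D)(H_{n+1} H_m) + α (n+1) H_n H_m`, so the linearization formula follows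
by induction on `m`, its coefficients `a(m,n,i) = α^i i! C(m,i) C(n,i)` satisfying the matching
Pascal-type rule `a(m+1,n+1,i+1) = a(m,n+1,i+1) + α (n+1) a(m,n,i)`.
-/

open Polynomial

/-- The generalized Hermite polynomial with parameter `α`. -/
noncomputable def genHermite (α : ℝ) (n : ℕ) : Polynomial ℝ :=
  ∑ j ∈ Finset.range (n / 2 + 1),
    C ((n.factorial : ℝ) * (-α) ^ j / (2 ^ j * j.factorial * (n - 2 * j).factorial)) *
      X ^ (n - 2 * j)

open Finset

/-- The coefficient of `X ^ (n - 2 * j)` in `genHermite α n`, written with `n.choose (2 * j)` so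
that, unlike the summand in `genHermite`, it vanishes when `2 * j > n`. -/
noncomputable def genHermiteCoeff (α : ℝ) (n j : ℕ) : ℝ :=
  (n.choose (2 * j) : ℝ) * (2 * j).factorial * (-α) ^ j / (2 ^ j * j.factorial)

noncomputable def linearizationCoeff (α : ℝ) (m n i : ℕ) : ℝ :=
  α ^ i * i.factorial * m.choose i * n.choose i

section

variable (α : ℝ)

theorem genHermiteCoeff_zero_right (n : ℕ) : genHermiteCoeff α n 0 = 1 := by
  simp [genHermiteCoeff]

theorem genHermiteCoeff_of_lt {n j : ℕ} (h : n < 2 * j) : genHermiteCoeff α n j = 0 := by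
  simp [genHermiteCoeff, Nat.choose_eq_zero_of_lt h]

theorem genHermiteCoeff_succ_mul (n j : ℕ) :
    genHermiteCoeff α (n + 1) j * ((n + 1 - 2 * j : ℕ) : ℝ) =
      (n + 1) * genHermiteCoeff α n j := by
  have h : (n.choose (2 * j) : ℝ) * (n + 1) =
      (n + 1).choose (2 * j) * ((n + 1 - 2 * j : ℕ) : ℝ) := by
    exact_mod_cast Nat.choose_mul_succ_eq n (2 * j)
  unfold genHermiteCoeff
  linear_combination (-((2 * j).factorial * (-α) ^ j / (2 ^ j * j.factorial) : ℝ)) * h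

theorem genHermiteCoeff_succ_succ (n j : ℕ) :
    genHermiteCoeff α (n + 1) (j + 1) =
      genHermiteCoeff α (n + 2) (j + 1) + α * (n + 1) * genHermiteCoeff α n j := by
  set u : ℝ := (2 * j).factorial * (-α) ^ j / (2 ^ j * j.factorial)
  have shift : ∀ m,
      genHermiteCoeff α m (j + 1) = -α * (2 * j + 1) * m.choose (2 * j + 2) * u := by
    intro m
    simp only [genHermiteCoeff, u, show 2 * (j + 1) = 2 * j + 1 + 1 by ring, Nat.factorial_succ]
    push_cast
    field_simp
    ring
  have pascal : ((n + 2).choose (2 * j + 2) : ℝ) =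
      (n + 1).choose (2 * j + 1) + (n + 1).choose (2 * j + 2) := by
    exact_mod_cast Nat.choose_succ_succ' (n + 1) (2 * j + 1)
  have absorb : ((n : ℝ) + 1) * n.choose (2 * j) = (n + 1).choose (2 * j + 1) * (2 * j + 1) := by
    exact_mod_cast Nat.add_one_mul_choose_eq n (2 * j)
  rw [shift, shift, genHermiteCoeff]
  linear_combination (α * (2 * j + 1) * u) * pascal - (α * u) * absorb

theorem genHermite_eq_sum_range {n N : ℕ} (hN : n < 2 * N) :
    genHermite α n = ∑ j ∈ range N, C (genHermiteCoeff α n j) * X ^ (n - 2 * j) := by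
  have hcoeff : ∀ j ∈ range (n / 2 + 1),
      (n.factorial : ℝ) * (-α) ^ j / (2 ^ j * j.factorial * (n - 2 * j).factorial) =
        genHermiteCoeff α n j := by
    intro j hj
    have hj : 2 * j ≤ n := by rw [mem_range] at hj; omega
    have h : ((n.choose (2 * j) * (2 * j).factorial * (n - 2 * j).factorial : ℕ) : ℝ) =
        n.factorial := by
      exact_mod_cast Nat.choose_mul_factorial_mul_factorial hj
    rw [genHermiteCoeff, ← h]
    push_cast
    field_simp
  rw [genHermite, sum_congr rfl fun j hj => by rw [hcoeff j hj]]
  refine sum_subset (range_subset_range.mpr (by omega)) fun j _ hj => ?_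
  rw [mem_range] at hj
  rw [genHermiteCoeff_of_lt α (by omega), C_0, zero_mul]

theorem genHermite_zero : genHermite α 0 = 1 := by
  simp [genHermite]

theorem derivative_genHermite_succ (n : ℕ) :
    derivative (genHermite α (n + 1)) = C ((n : ℝ) + 1) * genHermite α n := by
  rw [genHermite_eq_sum_range α (N := n + 1) (by omega),
    genHermite_eq_sum_range α (N := n + 1) (by omega), derivative_sum, mul_sum]
  refine sum_congr rfl fun j _ => ?_
  rw [derivative_C_mul_X_pow, genHermiteCoeff_succ_mul, C_mul, mul_assoc,
    show n + 1 - 2 * j - 1 = n - 2 * j by omega]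

theorem X_mul_C_genHermiteCoeff_mul_X_pow (n j : ℕ) :
    X * (C (genHermiteCoeff α n j) * X ^ (n - 2 * j)) =
      C (genHermiteCoeff α n j) * X ^ (n + 1 - 2 * j) := by
  rcases le_or_gt (2 * j) n with hj | hj
  · rw [show n + 1 - 2 * j = n - 2 * j + 1 by omega, pow_succ]
    ring
  · simp [genHermiteCoeff_of_lt α hj]

theorem X_mul_genHermite_succ (n : ℕ) :
    X * genHermite α (n + 1) = genHermite α (n + 2) + C (α * (n + 1)) * genHermite α n := by
  have termwise : ∀ j ∈ range (n + 1),
      C (genHermiteCoeff α (n + 1) (j + 1)) * X ^ (n + 1 + 1 - 2 * (j + 1)) =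
        C (genHermiteCoeff α (n + 2) (j + 1)) * X ^ (n + 2 - 2 * (j + 1)) +
          C (α * (n + 1)) * (C (genHermiteCoeff α n j) * X ^ (n - 2 * j)) := fun j _ => by
    rw [genHermiteCoeff_succ_succ, C_add, add_mul, C_mul, mul_assoc,
      show n + 2 - 2 * (j + 1) = n - 2 * j by omega]
  rw [genHermite_eq_sum_range α (N := n + 2) (by omega),
    genHermite_eq_sum_range α (N := n + 2) (by omega),
    genHermite_eq_sum_range α (N := n + 1) (by omega), mul_sum,
    sum_congr rfl fun j _ => X_mul_C_genHermiteCoeff_mul_X_pow α (n + 1) j,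
    sum_range_succ' (fun j => C (genHermiteCoeff α (n + 1) j) * X ^ (n + 1 + 1 - 2 * j)),
    sum_range_succ' (fun j => C (genHermiteCoeff α (n + 2) j) * X ^ (n + 2 - 2 * j)),
    sum_congr rfl termwise, sum_add_distrib, mul_sum,
    genHermiteCoeff_zero_right, genHermiteCoeff_zero_right]
  ring

theorem genHermite_succ (n : ℕ) :
    genHermite α (n + 1) = X * genHermite α n - C α * derivative (genHermite α n) := by
  cases n with
  | zero => simp [genHermite]
  | succ n =>
    rw [X_mul_genHermite_succ, derivative_genHermite_succ, ← mul_assoc, ← C_mul]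
    ring

theorem X_mul_sum_sub_C_mul_derivative_sum (s : Finset ℕ) (c : ℕ → ℝ) (k : ℕ → ℕ) :
    X * ∑ i ∈ s, C (c i) * genHermite α (k i)
        - C α * derivative (∑ i ∈ s, C (c i) * genHermite α (k i)) =
      ∑ i ∈ s, C (c i) * genHermite α (k i + 1) := by
  rw [mul_sum, derivative_sum, mul_sum, ← sum_sub_distrib]
  refine sum_congr rfl fun i _ => ?_
  rw [derivative_C_mul, genHermite_succ]
  ring

theorem genHermite_succ_mul_genHermite_succ (m n : ℕ) :
    genHermite α (n + 1) * genHermite α (m + 1) =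
      X * (genHermite α (n + 1) * genHermite α m)
        - C α * derivative (genHermite α (n + 1) * genHermite α m)
        + C (α * (n + 1)) * (genHermite α n * genHermite α m) := by
  rw [genHermite_succ α m, derivative_mul, derivative_genHermite_succ, C_mul]
  ring

theorem linearizationCoeff_zero_right (m n : ℕ) : linearizationCoeff α m n 0 = 1 := by
  simp [linearizationCoeff]

theorem linearizationCoeff_succ_succ (m n i : ℕ) :
    linearizationCoeff α (m + 1) (n + 1) (i + 1) =
      linearizationCoeff α m (n + 1) (i + 1) + α * (n + 1) * linearizationCoeff α m n i := by
  have pascal : ((m + 1).choose (i + 1) : ℝ) = m.choose i + m.choose (i + 1) := by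
    exact_mod_cast Nat.choose_succ_succ' m i
  have absorb : ((n : ℝ) + 1) * n.choose i = (n + 1).choose (i + 1) * (i + 1) := by
    exact_mod_cast Nat.add_one_mul_choose_eq n i
  simp only [linearizationCoeff, Nat.factorial_succ, pow_succ]
  push_cast
  linear_combination (α ^ i * α * i.factorial * (i + 1) * (n + 1).choose (i + 1)) * pascal
    - (α ^ i * α * i.factorial * m.choose i) * absorb

theorem sum_range_min_linearizationCoeff_succ (m n : ℕ) (f : ℕ → ℝ[X]) :
    ∑ i ∈ range (min m (n + 1)), C (linearizationCoeff α m (n + 1) (i + 1)) * f i =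
      ∑ i ∈ range (min m n + 1), C (linearizationCoeff α m (n + 1) (i + 1)) * f i := by
  refine sum_subset (range_subset_range.mpr (by omega)) fun i hi hi' => ?_
  simp only [mem_range] at hi hi'
  simp [linearizationCoeff, Nat.choose_eq_zero_of_lt (show m < i + 1 by omega)]

theorem genHermite_mul_genHermite (m n : ℕ) :
    genHermite α n * genHermite α m =
      ∑ i ∈ range (min m n + 1),
        C (linearizationCoeff α m n i) * genHermite α (m + n - 2 * i) := by
  induction m generalizing n with
  | zero => simp [genHermite_zero, linearizationCoeff]
  | succ m ih =>
    cases n with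
    | zero => simp [genHermite_zero, linearizationCoeff]
    | succ n =>
      set H := genHermite α
      have raised : X * (H (n + 1) * H m) - C α * derivative (H (n + 1) * H m) =
          ∑ i ∈ range (min m (n + 1) + 1),
            C (linearizationCoeff α m (n + 1) i) * H (m + 1 + (n + 1) - 2 * i) := by
        rw [ih, X_mul_sum_sub_C_mul_derivative_sum]
        refine sum_congr rfl fun i hi => ?_
        rw [mem_range] at hi
        rw [show m + (n + 1) - 2 * i + 1 = m + 1 + (n + 1) - 2 * i by omega]
      have combine : ∀ i ∈ range (min m n + 1),
          C (linearizationCoeff α (m + 1) (n + 1) (i + 1)) * H (m + n - 2 * i) =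
            C (linearizationCoeff α m (n + 1) (i + 1)) * H (m + n - 2 * i) +
              C (α * (n + 1)) * (C (linearizationCoeff α m n i) * H (m + n - 2 * i)) := by
        intro i _
        rw [linearizationCoeff_succ_succ, C_add, C_mul]
        ring
      have index : ∀ i, m + 1 + (n + 1) - 2 * (i + 1) = m + n - 2 * i := fun i => by omega
      rw [genHermite_succ_mul_genHermite_succ, raised, ih, Nat.add_min_add_right,
        sum_range_succ' _ (min m (n + 1)), sum_range_succ' _ (min m n + 1)]
      simp only [index, sum_range_min_linearizationCoeff_succ]
      rw [sum_congr rfl combine, sum_add_distrib, mul_sum, linearizationCoeff_zero_right,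
        linearizationCoeff_zero_right]
      ring

end

theorem stmt_6_general (α : ℝ) (m n : ℕ) :
    genHermite α n * genHermite α m =
      ∑ i ∈ Finset.range (min m n + 1),
        C (α ^ i * (i.factorial : ℝ) * (m.choose i : ℝ) * (n.choose i : ℝ)) *
          genHermite α (m + n - 2 * i) :=
  genHermite_mul_genHermite α m n

theorem stmt_6 (α : ℝ) (hα : 0 < α) (m n : ℕ) :
    genHermite α n * genHermite α m =
      ∑ i ∈ Finset.range (min m n + 1),
        C (α ^ i * (i.factorial : ℝ) * (m.choose i : ℝ) * (n.choose i : ℝ)) *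
          genHermite α (m + n - 2 * i) :=
  stmt_6_general α m n
end

section
/- The classical Hermite polynomials H_n satisfy Carlitz's linearization formula: H_n(x) H_m(x) = ∑_{i=0}^{min(m,n)} 2^i i! C(m,i) C(n,i) H_{m+n-2i}(x). -/
open Polynomial

/-- The classical (physicists') Hermite polynomials:
`H_0 = 1`, `H_1 = 2x`, `H_{n+2}(x) = 2x H_{n+1}(x) - 2(n+1) H_n(x)`. -/
noncomputable def physHermite : ℕ → Polynomial ℝ
  | 0 => 1
  | 1 => 2 * X
  | (n + 2) => 2 * X * physHermite (n + 1) - C (2 * ((n : ℝ) + 1)) * physHermite n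

/-
The recurrence says `H_{n+1} = (2X - D) H_n`, and `D H_{m+1} = 2(m+1) H_m`. Since `D` is a
derivation, `H_{n+1} H_{m+1} = (2X - D)(H_n H_{m+1}) + 2(m+1) H_n H_m`, so by induction on `n`
the products `H_n H_m` expand in the `H_k` with coefficients obeying
`c(m+1, n+1, i+1) = c(m+1, n, i+1) + 2(m+1) c(m, n, i)`, which the closed form
`2^i i! C(m,i) C(n,i)` does by Pascal's rule and `(i+1) C(m+1,i+1) = (m+1) C(m,i)`.
-/

theorem derivative_physHermite_succ :
    ∀ n : ℕ, derivative (physHermite (n + 1)) = C (2 * ((n : ℝ) + 1)) * physHermite n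
  | 0 => by rw [physHermite, physHermite]; simp [← C_ofNat]
  | 1 => by
    simp only [physHermite, derivative_mul, derivative_sub, derivative_C, derivative_X,
      derivative_ofNat, derivative_one]
    simp only [map_mul, map_ofNat, map_add, map_one, Nat.cast_one]
    ring
  | n + 2 => by
    rw [physHermite, derivative_sub, derivative_mul, derivative_C_mul,
      derivative_physHermite_succ (n + 1), derivative_physHermite_succ n, physHermite]
    simp only [derivative_mul, derivative_ofNat, derivative_X, map_mul, map_add, map_ofNat,
      map_natCast, map_one]
    push_cast
    ring

theorem physHermite_succ (n : ℕ) :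
    physHermite (n + 1) = 2 * X * physHermite n - derivative (physHermite n) := by
  cases n with
  | zero => simp [physHermite]
  | succ n => rw [derivative_physHermite_succ, physHermite]

/-- The coefficient of `H_{m+n-2i}` in the expansion of `H_n H_m`. -/
noncomputable def hermiteLinCoeff (m n i : ℕ) : ℝ :=
  2 ^ i * (i.factorial : ℝ) * (m.choose i : ℝ) * (n.choose i : ℝ)

theorem hermiteLinCoeff_succ_succ_succ (m n i : ℕ) :
    hermiteLinCoeff (m + 1) (n + 1) (i + 1) =
      hermiteLinCoeff (m + 1) n (i + 1) + 2 * ((m : ℝ) + 1) * hermiteLinCoeff m n i := by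
  have absorb : ((m : ℝ) + 1) * m.choose i = (m + 1).choose (i + 1) * ((i : ℝ) + 1) := by
    exact_mod_cast Nat.add_one_mul_choose_eq m i
  simp only [hermiteLinCoeff, Nat.choose_succ_succ' n i, Nat.factorial_succ]
  push_cast
  linear_combination -(2 : ℝ) ^ (i + 1) * i.factorial * n.choose i * absorb

@[simp]
theorem hermiteLinCoeff_zero (m n : ℕ) : hermiteLinCoeff m n 0 = 1 := by
  simp [hermiteLinCoeff]

theorem hermiteLinCoeff_eq_zero_of_lt_left {m n i : ℕ} (h : m < i) :
    hermiteLinCoeff m n i = 0 := by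
  simp [hermiteLinCoeff, Nat.choose_eq_zero_of_lt h]

theorem hermiteLinCoeff_eq_zero_of_lt_right {m n i : ℕ} (h : n < i) :
    hermiteLinCoeff m n i = 0 := by
  simp [hermiteLinCoeff, Nat.choose_eq_zero_of_lt h]

theorem sum_hermiteLinCoeff_of_min_eq_zero {m n : ℕ} (h : min m n = 0) (N : ℕ) :
    ∑ i ∈ Finset.range (N + 1), C (hermiteLinCoeff m n i) * physHermite (m + n - 2 * i) =
      physHermite (m + n) := by
  have vanish (i : ℕ) : hermiteLinCoeff m n (i + 1) = 0 := by
    rcases Nat.min_eq_zero_iff.mp h with rfl | rfl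
    · exact hermiteLinCoeff_eq_zero_of_lt_left i.succ_pos
    · exact hermiteLinCoeff_eq_zero_of_lt_right i.succ_pos
  simp [Finset.sum_range_succ', vanish]

theorem two_mul_X_mul_sub_derivative_sum {ι : Type*} (s : Finset ι) (a : ι → ℝ) (k : ι → ℕ) :
    2 * X * (∑ i ∈ s, C (a i) * physHermite (k i)) -
        derivative (∑ i ∈ s, C (a i) * physHermite (k i)) =
      ∑ i ∈ s, C (a i) * physHermite (k i + 1) := by
  rw [Finset.mul_sum, derivative_sum, ← Finset.sum_sub_distrib]
  refine Finset.sum_congr rfl fun i _ => ?_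
  rw [physHermite_succ, derivative_C_mul]
  ring

theorem physHermite_succ_mul_physHermite_succ (n m : ℕ) :
    physHermite (n + 1) * physHermite (m + 1) =
      2 * X * (physHermite n * physHermite (m + 1)) -
          derivative (physHermite n * physHermite (m + 1)) +
        C (2 * ((m : ℝ) + 1)) * (physHermite n * physHermite m) := by
  rw [physHermite_succ n, derivative_mul, derivative_physHermite_succ]
  ring

theorem C_hermiteLinCoeff_succ_succ_succ_mul (m n i : ℕ) :
    C (hermiteLinCoeff (m + 1) n (i + 1)) * physHermite (m + 1 + n - 2 * (i + 1) + 1) +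
        C (2 * ((m : ℝ) + 1)) * (C (hermiteLinCoeff m n i) * physHermite (m + n - 2 * i)) =
      C (hermiteLinCoeff (m + 1) (n + 1) (i + 1)) *
        physHermite (m + 1 + (n + 1) - 2 * (i + 1)) := by
  rw [← mul_assoc, ← C_mul, hermiteLinCoeff_succ_succ_succ, C_add, add_mul,
    show m + 1 + (n + 1) - 2 * (i + 1) = m + n - 2 * i by omega]
  congr 1
  -- with truncated subtraction the two indices agree only where the first coefficient is nonzero
  rcases lt_or_ge i n with hin | hin
  · rcases le_or_gt i m with him | him
    · rw [show m + 1 + n - 2 * (i + 1) + 1 = m + n - 2 * i by omega]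
    · rw [hermiteLinCoeff_eq_zero_of_lt_left (by omega), C_0, zero_mul, zero_mul]
  · rw [hermiteLinCoeff_eq_zero_of_lt_right (by omega), C_0, zero_mul, zero_mul]

theorem physHermite_mul_physHermite_eq_sum (n m N : ℕ) (hN : min m n < N) :
    physHermite n * physHermite m =
      ∑ i ∈ Finset.range N, C (hermiteLinCoeff m n i) * physHermite (m + n - 2 * i) := by
  obtain ⟨N, rfl⟩ := Nat.exists_eq_add_one.mpr (show 0 < N by omega)
  induction n generalizing m N with
  | zero => rw [sum_hermiteLinCoeff_of_min_eq_zero (by simp)]; simp [physHermite]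
  | succ n ih =>
    cases m with
    | zero => rw [sum_hermiteLinCoeff_of_min_eq_zero (by simp)]; simp [physHermite]
    | succ m =>
      obtain ⟨N, rfl⟩ := Nat.exists_eq_add_one.mpr (show 0 < N by omega)
      rw [physHermite_succ_mul_physHermite_succ, ih (m + 1) (N + 1) (by omega),
        ih m N (by omega), two_mul_X_mul_sub_derivative_sum, Finset.mul_sum,
        Finset.sum_range_succ', Finset.sum_range_succ' _ (N + 1), add_right_comm,
        ← Finset.sum_add_distrib]
      simp only [C_hermiteLinCoeff_succ_succ_succ_mul, hermiteLinCoeff_zero]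
      congr 2

theorem stmt_7 (m n : ℕ) :
    physHermite n * physHermite m =
      ∑ i ∈ Finset.range (min m n + 1),
        C ((2 : ℝ) ^ i * (i.factorial : ℝ) * (m.choose i : ℝ) * (n.choose i : ℝ)) *
          physHermite (m + n - 2 * i) :=
  physHermite_mul_physHermite_eq_sum n m _ (Nat.lt_succ_self _)
end

section
/- Let {γ_n} be a real sequence, g*_n(-1) = ∑_{k=0}^{n} C(n,k) γ_k (-1)^{n-k}, α > 0, and for k ≥ 2 let Q_k(x) = ∑_{j=0}^{⌊k/2⌋} ((-α)^j / (j!(k-2j)!)) g*_{k-j}(-1) H^{(α)}_{k-2j}(x). If Q_k has only real zeros, then (g*_k(-1))² + 2 g*_k(-1) g*_{k-1}(-1) ≥ 0. -/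
/-!
The polynomial `Q_k` has degree at most `k`, leading coefficient `g*_k(-1)/k!`, no `x^{k-1}` term
(each `H^{(α)}_m` has the parity of `m`), and `x^{k-2}` coefficient
`-α (g*_k(-1)/2 + g*_{k-1}(-1)) / (k-2)!`. For a real-rooted polynomial `c_k x^k + c_{k-1} x^{k-1} + …`
the sum of the squares of the roots is `(c_{k-1}/c_k)² - 2 c_{k-2}/c_k ≥ 0`; with `c_{k-1} = 0` this
says `c_k c_{k-2} ≤ 0`, and `c_k c_{k-2}` is a negative multiple of
`g*_k(-1)² + 2 g*_k(-1) g*_{k-1}(-1)`.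
-/

open Polynomial

/-- `g*_n(-1) = ∑_{k=0}^n C(n,k) γ_k (-1)^{n-k}`. -/
noncomputable def gstar (γ : ℕ → ℝ) (n : ℕ) : ℝ :=
  ∑ k ∈ Finset.range (n + 1), (n.choose k : ℝ) * γ k * (-1) ^ (n - k)

/-- The coefficient polynomials of the Hermite-diagonal operator. -/
noncomputable def Qpoly (α : ℝ) (γ : ℕ → ℝ) (k : ℕ) : Polynomial ℝ :=
  ∑ j ∈ Finset.range (k / 2 + 1),
    C ((-α) ^ j / (j.factorial * (k - 2 * j).factorial) * gstar γ (k - j)) *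
      genHermite α (k - 2 * j)

namespace Multiset

variable {R : Type*} [CommSemiring R]

theorem esymm_two_cons (a : R) (s : Multiset R) :
    (a ::ₘ s).esymm 2 = s.esymm 2 + a * s.sum := by
  rw [esymm, powersetCard_cons, map_add, sum_add, ← esymm, map_map, powersetCard_one, map_map]
  congr 1
  simpa using sum_map_mul_left (s := s) (a := a) (f := id)

theorem sq_sum_eq_sum_map_sq_add_two_mul_esymm_two (s : Multiset R) :
    s.sum ^ 2 = (s.map (· ^ 2)).sum + 2 * s.esymm 2 := by
  induction s using Multiset.induction with
  | empty => simp [esymm, powersetCard_zero_right]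
  | cons a s ih =>
    rw [sum_cons, map_cons, sum_cons, esymm_two_cons, add_sq, ih]
    ring

end Multiset

namespace Polynomial

theorem splits_of_isRoot_map_complex_im_eq_zero {p : ℝ[X]}
    (hreal : ∀ z : ℂ, (p.map (algebraMap ℝ ℂ)).IsRoot z → z.im = 0) : p.Splits := by
  refine Splits.of_splits_map_of_injective (algebraMap ℝ ℂ).injective (IsAlgClosed.splits _)
    fun z hz => ⟨z.re, ?_⟩
  exact Complex.ext rfl (hreal z (isRoot_of_mem_roots hz)).symm

/-- Vieta: the right side minus the left is `leadingCoeff² * (e₁² - 2 e₂)` of the roots, i.e.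
`leadingCoeff²` times the sum of their squares. -/
theorem two_mul_leadingCoeff_mul_coeff_le_sq_of_splits {F : Type*} [Field F] [LinearOrder F]
    [IsStrictOrderedRing F] {p : F[X]} (hp : p.Splits) (h2 : 2 ≤ p.natDegree) :
    2 * p.leadingCoeff * p.coeff (p.natDegree - 2) ≤ p.coeff (p.natDegree - 1) ^ 2 := by
  have hc1 := coeff_eq_esymm_roots_of_splits hp (Nat.sub_le p.natDegree 1)
  have hc2 := coeff_eq_esymm_roots_of_splits hp (Nat.sub_le p.natDegree 2)
  rw [Nat.sub_sub_self (by omega : 1 ≤ p.natDegree), Multiset.esymm, Multiset.powersetCard_one,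
    Multiset.map_map] at hc1
  rw [Nat.sub_sub_self h2] at hc2
  have hsq := p.roots.sq_sum_eq_sum_map_sq_add_two_mul_esymm_two
  have hnonneg : 0 ≤ (p.roots.map (· ^ 2)).sum :=
    Multiset.sum_nonneg fun x hx => by
      obtain ⟨r, -, rfl⟩ := Multiset.mem_map.1 hx
      positivity
  simp only [Function.comp_def, Multiset.prod_singleton, Multiset.map_id'] at hc1
  rw [hc1, hc2]
  nlinarith [mul_nonneg (sq_nonneg p.leadingCoeff) hnonneg]

end Polynomial

theorem genHermite_coeff_sub_two_mul (α : ℝ) {n j : ℕ} (hj : 2 * j ≤ n) :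
    (genHermite α n).coeff (n - 2 * j) =
      n.factorial * (-α) ^ j / (2 ^ j * j.factorial * (n - 2 * j).factorial) := by
  rw [genHermite, finsetSum_coeff, Finset.sum_eq_single j]
  · rw [coeff_C_mul_X_pow, if_pos rfl]
  · intro i hi hij
    rw [Finset.mem_range] at hi
    rw [coeff_C_mul_X_pow, if_neg (by omega)]
  · intro hj'
    exact absurd (Finset.mem_range.2 (by omega)) hj'

theorem genHermite_natDegree_le (α : ℝ) (n : ℕ) : (genHermite α n).natDegree ≤ n :=
  natDegree_sum_le_of_forall_le _ _ fun _ _ =>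
    (natDegree_C_mul_X_pow_le _ _).trans (Nat.sub_le _ _)

theorem genHermite_coeff_eq_zero_of_lt (α : ℝ) {n m : ℕ} (h : n < m) :
    (genHermite α n).coeff m = 0 :=
  coeff_eq_zero_of_natDegree_lt ((genHermite_natDegree_le α n).trans_lt h)

theorem genHermite_coeff_self (α : ℝ) (n : ℕ) : (genHermite α n).coeff n = 1 := by
  simpa [Nat.factorial_ne_zero] using
    genHermite_coeff_sub_two_mul α (n := n) (j := 0) (Nat.zero_le n)

theorem genHermite_coeff_sub_one (α : ℝ) {n : ℕ} (hn : 1 ≤ n) :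
    (genHermite α n).coeff (n - 1) = 0 := by
  rw [genHermite, finsetSum_coeff]
  refine Finset.sum_eq_zero fun j hj => ?_
  rw [Finset.mem_range] at hj
  rw [coeff_C_mul_X_pow, if_neg (by omega)]

theorem genHermite_coeff_sub_two (α : ℝ) {n : ℕ} (hn : 2 ≤ n) :
    (genHermite α n).coeff (n - 2) = -α * n.factorial / (2 * (n - 2).factorial) := by
  have := genHermite_coeff_sub_two_mul α (n := n) (j := 1) hn
  simp only [mul_one, pow_one, Nat.factorial_one, Nat.cast_one] at this
  rw [this]
  ring

theorem Qpoly_coeff (α : ℝ) (γ : ℕ → ℝ) (k m : ℕ) :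
    (Qpoly α γ k).coeff m = ∑ j ∈ Finset.range (k / 2 + 1),
      (-α) ^ j / (j.factorial * (k - 2 * j).factorial) * gstar γ (k - j) *
        (genHermite α (k - 2 * j)).coeff m := by
  simp only [Qpoly, finsetSum_coeff, coeff_C_mul]

theorem Qpoly_natDegree_le (α : ℝ) (γ : ℕ → ℝ) (k : ℕ) : (Qpoly α γ k).natDegree ≤ k :=
  natDegree_sum_le_of_forall_le _ _ fun _ _ =>
    (natDegree_C_mul_le _ _).trans ((genHermite_natDegree_le _ _).trans (Nat.sub_le _ _))

theorem Qpoly_coeff_self (α : ℝ) (γ : ℕ → ℝ) (k : ℕ) :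
    (Qpoly α γ k).coeff k = gstar γ k / k.factorial := by
  rw [Qpoly_coeff, Finset.sum_eq_single 0]
  · simp [genHermite_coeff_self, inv_mul_eq_div]
  · intro j hj hj0
    rw [genHermite_coeff_eq_zero_of_lt α (by rw [Finset.mem_range] at hj; omega), mul_zero]
  · simp

theorem Qpoly_coeff_sub_one (α : ℝ) (γ : ℕ → ℝ) {k : ℕ} (hk : 1 ≤ k) :
    (Qpoly α γ k).coeff (k - 1) = 0 := by
  rw [Qpoly_coeff]
  refine Finset.sum_eq_zero fun j hj => ?_
  rcases j.eq_zero_or_pos with rfl | hj0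
  · simp [genHermite_coeff_sub_one α hk]
  · rw [Finset.mem_range] at hj
    rw [genHermite_coeff_eq_zero_of_lt α (by omega), mul_zero]

theorem Qpoly_coeff_sub_two (α : ℝ) (γ : ℕ → ℝ) {k : ℕ} (hk : 2 ≤ k) :
    (Qpoly α γ k).coeff (k - 2) =
      -α * (gstar γ k / 2 + gstar γ (k - 1)) / (k - 2).factorial := by
  rw [Qpoly_coeff, ← Finset.sum_subset (Finset.range_subset_range.2 (by omega : 2 ≤ k / 2 + 1))]
  · have hfac : (k.factorial : ℝ) ≠ 0 := by positivity
    simp only [Finset.sum_range_succ, Finset.sum_range_zero, Nat.sub_zero, mul_zero, mul_one,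
      genHermite_coeff_sub_two α hk, genHermite_coeff_self]
    field_simp
    ring
  · intro j hj hj2
    rw [Finset.mem_range] at hj hj2
    rw [genHermite_coeff_eq_zero_of_lt α (by omega), mul_zero]

theorem stmt_11 (α : ℝ) (hα : 0 < α) (γ : ℕ → ℝ) (k : ℕ) (hk : 2 ≤ k)
    (hreal : ∀ z : ℂ, ((Qpoly α γ k).map (algebraMap ℝ ℂ)).IsRoot z → z.im = 0) :
    0 ≤ (gstar γ k) ^ 2 + 2 * gstar γ k * gstar γ (k - 1) := by
  by_cases hA : gstar γ k = 0
  · simp [hA]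
  have hdeg : (Qpoly α γ k).natDegree = k := by
    refine le_antisymm (Qpoly_natDegree_le α γ k) (le_natDegree_of_ne_zero ?_)
    rw [Qpoly_coeff_self]
    positivity
  have hnewton := two_mul_leadingCoeff_mul_coeff_le_sq_of_splits
    (splits_of_isRoot_map_complex_im_eq_zero hreal) (by omega)
  rw [leadingCoeff, hdeg, Qpoly_coeff_self, Qpoly_coeff_sub_one α γ (by omega),
    Qpoly_coeff_sub_two α γ hk] at hnewton
  have hpos : 0 < α / (k.factorial * (k - 2).factorial) := by positivity
  refine (mul_nonneg_iff_of_pos_left hpos).1 ?_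
  calc 0 ≤ -(2 * (gstar γ k / k.factorial) *
        (-α * (gstar γ k / 2 + gstar γ (k - 1)) / (k - 2).factorial)) := by linarith
    _ = _ := by ring
end

section
/- Let T : ℝ[x] → ℝ[x] be a linear operator of the form T = ∑_{k=0}^{N} Q_k(x) D^k with real polynomials Q_k, and suppose T is diagonal with respect to a simple set {B_k(x)} (deg B_k = k) with eigenvalues γ_k, i.e., T[B_n] = γ_n B_n for all n. Then γ_n = ∑_{k=0}^{N} C(n,k) Q_k^{(k)}(x) for all n (the right-hand side is a constant, independent of x), so the polynomial p(x) = ∑_{k=0}^{N} C(x,k) Q_k^{(k)}(x) interpolates the eigenvalues: p(n) = γ_n. -/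
/-!
The operator `T = ∑ Q_k D^k` cannot raise degrees, since `T[B_n] = γ_n B_n`. Inducting on `k`,
the `k`-th term of `T[B_k]` is `k! · lc(B_k) · Q_k` and all other terms have degree `≤ k`, so
`deg Q_k ≤ k`. Comparing the coefficients of `x^n` in `T[B_n] = γ_n B_n` then gives
`γ_n = ∑_k n(n-1)⋯(n-k+1) · [x^k] Q_k = ∑_k C(n,k) · Q_k^{(k)}`.
-/

open Polynomial Finset Nat

section CommSemiring

variable {R : Type*} [CommSemiring R]

theorem iterate_derivative_eq_C_of_natDegree_le {p : R[X]} {n : ℕ} (hp : p.natDegree ≤ n) :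
    derivative^[n] p = C ((n ! : R) * p.coeff n) := by
  refine (eq_C_of_natDegree_le_zero ?_).trans ?_
  · exact (natDegree_iterate_derivative p n).trans (by omega)
  · rw [coeff_iterate_derivative, zero_add, descFactorial_self, nsmul_eq_mul]

theorem natDegree_mul_iterate_derivative_le {q p : R[X]} {j n : ℕ}
    (hq : q.natDegree ≤ j) (hp : p.natDegree ≤ n) :
    (q * derivative^[j] p).natDegree ≤ n := by
  rcases le_or_gt j n with hjn | hnj
  · have := natDegree_iterate_derivative p j
    exact natDegree_mul_le.trans (by omega)
  · rw [iterate_derivative_eq_zero (hp.trans_lt hnj), mul_zero, natDegree_zero]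
    exact zero_le n

theorem coeff_mul_iterate_derivative_of_natDegree_le {q p : R[X]} {j n : ℕ}
    (hq : q.natDegree ≤ j) (hp : p.natDegree ≤ n) :
    (q * derivative^[j] p).coeff n = n.descFactorial j * q.coeff j * p.coeff n := by
  rcases le_or_gt j n with hjn | hnj
  · obtain ⟨m, rfl⟩ := Nat.exists_eq_add_of_le hjn
    have hp' : (derivative^[j] p).natDegree ≤ m :=
      (natDegree_iterate_derivative p j).trans (by omega)
    rw [coeff_mul_add_eq_of_natDegree_le hq hp', coeff_iterate_derivative, add_comm m j,
      nsmul_eq_mul]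
    ring
  · rw [iterate_derivative_eq_zero (hp.trans_lt hnj), descFactorial_eq_zero_iff_lt.2 hnj]
    simp

end CommSemiring

section Eigenbasis

variable {R : Type*} [CommRing R] [IsDomain R] {N : ℕ} {Q B : ℕ → R[X]}
  {γ : ℕ → R}

theorem natDegree_le_of_diffOp_eigenbasis [CharZero R] (hB : ∀ k, (B k).natDegree = k)
    (hB0 : ∀ k, B k ≠ 0)
    (hdiag : ∀ n, ∑ k ∈ range (N + 1), Q k * derivative^[k] (B n) = γ n • B n) :
    ∀ k ≤ N, (Q k).natDegree ≤ k := by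
  intro k
  induction k using Nat.strong_induction_on with
  | _ k ih =>
  intro hkN
  have hk : k ∈ range (N + 1) := mem_range.2 (by omega)
  have hrest : (∑ j ∈ (range (N + 1)).erase k, Q j * derivative^[j] (B k)).natDegree ≤ k := by
    refine natDegree_sum_le_of_forall_le _ _ fun j hj => ?_
    obtain ⟨hjk, hjN⟩ := mem_erase.1 hj
    rcases hjk.lt_or_gt with hjk | hkj
    · exact natDegree_mul_iterate_derivative_le (ih j hjk (by grind)) (hB k).le
    · rw [iterate_derivative_eq_zero ((hB k).trans_lt hkj), mul_zero, natDegree_zero]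
      exact zero_le k
  have hkth : C ((k ! : R) * (B k).coeff k) * Q k
      = γ k • B k - ∑ j ∈ (range (N + 1)).erase k, Q j * derivative^[j] (B k) := by
    rw [← hdiag k, ← add_sum_erase _ _ hk, iterate_derivative_eq_C_of_natDegree_le (hB k).le,
      mul_comm, add_sub_cancel_right]
  have hc : (k ! : R) * (B k).coeff k ≠ 0 :=
    mul_ne_zero (cast_ne_zero.2 k.factorial_ne_zero)
      (coeff_ne_zero_of_eq_degree ((degree_eq_iff_natDegree_eq (hB0 k)).2 (hB k)))
  rw [← natDegree_C_mul hc, hkth]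
  exact (natDegree_sub_le _ _).trans (max_le ((natDegree_smul_le _ _).trans (hB k).le) hrest)

theorem eigenvalue_eq_sum_descFactorial_mul_coeff (hB : ∀ k, (B k).natDegree = k)
    (hB0 : ∀ k, B k ≠ 0)
    (hdiag : ∀ n, ∑ k ∈ range (N + 1), Q k * derivative^[k] (B n) = γ n • B n)
    (hQ : ∀ k ≤ N, (Q k).natDegree ≤ k) (n : ℕ) :
    γ n = ∑ k ∈ range (N + 1), n.descFactorial k * (Q k).coeff k := by
  have h := congrArg (coeff · n) (hdiag n)
  simp only [finsetSum_coeff, coeff_smul, smul_eq_mul] at h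
  rw [sum_congr rfl fun k hk => coeff_mul_iterate_derivative_of_natDegree_le
    (hQ k (by grind)) (hB n).le, ← sum_mul] at h
  exact mul_right_cancel₀
    (coeff_ne_zero_of_eq_degree ((degree_eq_iff_natDegree_eq (hB0 n)).2 (hB n))) h.symm

end Eigenbasis

theorem stmt_13 (N : ℕ) (Q : ℕ → Polynomial ℝ) (B : ℕ → Polynomial ℝ)
    (hB : ∀ k, (B k).natDegree = k) (hB0 : ∀ k, B k ≠ 0) (γ : ℕ → ℝ)
    (hdiag : ∀ n : ℕ,
      ∑ k ∈ Finset.range (N + 1), Q k * (derivative^[k] (B n)) = γ n • B n) :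
    ∀ n : ℕ, ∀ x : ℝ,
      γ n = ∑ k ∈ Finset.range (N + 1), (n.choose k : ℝ) * (derivative^[k] (Q k)).eval x := by
  intro n x
  have hQ := natDegree_le_of_diffOp_eigenbasis hB hB0 hdiag
  rw [eigenvalue_eq_sum_descFactorial_mul_coeff hB hB0 hdiag hQ n]
  refine sum_congr rfl fun k hk => ?_
  rw [iterate_derivative_eq_C_of_natDegree_le (hQ k (by grind)), eval_C,
    descFactorial_eq_factorial_mul_choose]
  push_cast
  ring
end

section
/- Let {γ_n} be a real sequence with γ_n → γ, and suppose that for all k ≥ 2 and all p ≥ 0 the shifted quantities g*_{k,p}(-1) = ∑_{n=0}^{k} C(k,n) γ_{n+p}(-1)^{k-n} satisfy (2 g*_{k,p}(-1) + g*_{k+1,p}(-1)) · g*_{k+1,p}(-1) ≥ 0. Then g*_{k,0}(-1) = 0 for all k ≥ 2. -/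
/-- Shifted reversed Jensen coefficients: `g*_{k,p}(-1) = ∑_{n=0}^k C(k,n) γ_{n+p} (-1)^{k-n}`. -/
noncomputable def gstarShift (γ : ℕ → ℝ) (k p : ℕ) : ℝ :=
  ∑ n ∈ Finset.range (k + 1), (k.choose n : ℝ) * γ (n + p) * (-1) ^ (k - n)

/-!
`g*_{k,p}(-1)` is the `k`-th forward difference `Δ^k γ` evaluated at `p`, so
`g*_{k+1,p} = g*_{k,p+1} - g*_{k,p}` and the hypothesis says exactly
`g*_{k,p}² ≤ g*_{k,p+1}²`. Thus `p ↦ |g*_{k,p}|` is nondecreasing, while for `k ≥ 1` it tends to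
`0` because `γ` converges; hence it vanishes identically.
-/

open Filter Topology fwdDiff

section fwdDiff

variable {G : Type*} [AddCommGroup G] [TopologicalSpace G] [IsTopologicalAddGroup G]

theorem tendsto_fwdDiff_of_tendsto {f : ℕ → G} {L : G} (hf : Tendsto f atTop (𝓝 L)) :
    Tendsto (Δ_[1] f) atTop (𝓝 0) := by
  have := ((tendsto_add_atTop_iff_nat 1).mpr hf).sub hf
  rwa [sub_self] at this

theorem tendsto_fwdDiff_iter_of_tendsto_zero {f : ℕ → G} (hf : Tendsto f atTop (𝓝 0)) (k : ℕ) :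
    Tendsto ((Δ_[1])^[k] f) atTop (𝓝 0) := by
  induction k with
  | zero => exact hf
  | succ k ih => rw [Function.iterate_succ_apply']; exact tendsto_fwdDiff_of_tendsto ih

theorem tendsto_fwdDiff_iter_of_tendsto {f : ℕ → G} {L : G} (hf : Tendsto f atTop (𝓝 L))
    {k : ℕ} (hk : k ≠ 0) : Tendsto ((Δ_[1])^[k] f) atTop (𝓝 0) := by
  obtain ⟨j, rfl⟩ := Nat.exists_eq_succ_of_ne_zero hk
  exact tendsto_fwdDiff_iter_of_tendsto_zero (tendsto_fwdDiff_of_tendsto hf) j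

end fwdDiff

theorem eq_zero_of_monotone_norm_of_tendsto_zero {E : Type*} [SeminormedAddGroup E]
    {a : ℕ → E} (hmono : Monotone fun n ↦ ‖a n‖) (hlim : Tendsto a atTop (𝓝 0)) (n : ℕ) :
    ‖a n‖ = 0 :=
  le_antisymm (ge_of_tendsto (tendsto_zero_iff_norm_tendsto_zero.mp hlim)
    ((eventually_ge_atTop n).mono fun _ hp ↦ hmono hp)) (norm_nonneg _)

theorem abs_le_abs_add_of_two_mul_add_mul_nonneg {R : Type*} [CommRing R] [LinearOrder R]
    [IsStrictOrderedRing R] {x y : R} (h : 0 ≤ (2 * x + y) * y) : |x| ≤ |x + y| :=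
  sq_le_sq.mp (by linear_combination h)

theorem gstarShift_eq_fwdDiff_iter (γ : ℕ → ℝ) (k : ℕ) : gstarShift γ k = (Δ_[1])^[k] γ := by
  ext p
  rw [gstarShift, fwdDiff_iter_eq_sum_shift]
  refine Finset.sum_congr rfl fun n _ ↦ ?_
  rw [smul_eq_mul, mul_one, add_comm p, zsmul_eq_mul]
  push_cast
  ring

theorem gstarShift_succ_left (γ : ℕ → ℝ) (k p : ℕ) :
    gstarShift γ (k + 1) p = gstarShift γ k (p + 1) - gstarShift γ k p := by
  simp only [gstarShift_eq_fwdDiff_iter, Function.iterate_succ_apply', fwdDiff]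

theorem stmt_19 (γ : ℕ → ℝ) (L : ℝ) (hγ : Filter.Tendsto γ Filter.atTop (nhds L))
    (h : ∀ k, 2 ≤ k → ∀ p : ℕ,
      0 ≤ (2 * gstarShift γ k p + gstarShift γ (k + 1) p) * gstarShift γ (k + 1) p) :
    ∀ k, 2 ≤ k → gstarShift γ k 0 = 0 := by
  intro k hk
  have hstep (p : ℕ) : |gstarShift γ k p| ≤ |gstarShift γ k (p + 1)| := by
    simpa only [gstarShift_succ_left, add_sub_cancel] using
      abs_le_abs_add_of_two_mul_add_mul_nonneg (h k hk p)
  have hlim : Tendsto (gstarShift γ k) atTop (𝓝 0) := by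
    rw [gstarShift_eq_fwdDiff_iter]
    exact tendsto_fwdDiff_iter_of_tendsto hγ (by omega)
  exact norm_eq_zero.mp <| eq_zero_of_monotone_norm_of_tendsto_zero
    (monotone_nat_of_le_succ hstep) hlim 0
end
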